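/- arXiv:1707.07960 — 3 statements merged into one kernel-verified Lean document; each statement's English description precedes it below -/
import Mathlib

section
/- Let X and Y be topological spaces and f : X → Y, g : Y → X continuous maps. Then the mapping tori T(X, g ∘ f) and T(Y, f ∘ g) are homotopy equivalent. -/
/-- The gluing relation for the mapping torus: `(x,1) ~ (f x, 0)`. -/
inductive MappingTorusRel {X : Type*} (f : X → X) :
    X × unitInterval → X × unitInterval → Prop
  | glue (x : X) : MappingTorusRel f (x, 1) (f x, 0)

/-- The mapping torus `T(X,f) = X × [0,1] / ((x,1) ~ (f x,0))`, with the quotient topology. -/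
def MappingTorus {X : Type*} (f : X → X) : Type _ := Quot (MappingTorusRel f)

instance {X : Type*} [TopologicalSpace X] (f : X → X) : TopologicalSpace (MappingTorus f) :=
  instTopologicalSpaceQuot

/-!
A map `φ` intertwining `h₁` and `h₂` induces `[x, s] ↦ [φ x, s]` on mapping tori, functorially.
So the two composites of the maps induced by `f` and `g` are the maps `[x, s] ↦ [h x, s]` induced
by `h = g ∘ f` and `h = f ∘ g` on their own mapping tori. Each of these is homotopic to the
identity: flowing `[x, s]` to `[x, s + t]` for `t ∈ [0, 1]` ends at `[x, s + 1] = [h x, s]`.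
-/

open unitInterval Set

namespace MappingTorus

variable {X Y Z : Type*}

def mk (h : X → X) (x : X) (s : I) : MappingTorus h := Quot.mk _ (x, s)

theorem mk_one (h : X → X) (x : X) : mk h x 1 = mk h (h x) 0 :=
  Quot.sound (.glue x)

/-- `wind h x u` is the point at height `u ∈ [0, 2]` above `x`; past height `1` it has crossed
the gluing into the fibre over `h x`. -/
noncomputable def wind (h : X → X) (x : X) (u : ℝ) : MappingTorus h :=
  if u ≤ 1 then mk h x (projIcc 0 1 zero_le_one u)
  else mk h (h x) (projIcc 0 1 zero_le_one (u - 1))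

theorem wind_coe (h : X → X) (x : X) (s : I) : wind h x s = mk h x s := by
  simp [wind, s.2.2]

theorem wind_one_add (h : X → X) (x : X) (t : I) : wind h x (1 + t) = wind h (h x) t := by
  rcases eq_or_ne t 0 with rfl | ht
  · simp [wind, mk_one]
  · have : ¬ (1 + (t : ℝ) ≤ 1) := by simpa using unitInterval.pos_iff_ne_zero.mpr ht
    simp [wind, this, t.2.2]

noncomputable def flow (h : X → X) (t : I) : MappingTorus h → MappingTorus h :=
  Quot.lift (fun p => wind h p.1 (p.2 + t)) (by
    rintro _ _ ⟨x⟩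
    simp only [Icc.coe_one, Icc.coe_zero, zero_add, wind_one_add])

variable [TopologicalSpace X] [TopologicalSpace Y] [TopologicalSpace Z]

theorem continuous_mk (h : X → X) : Continuous fun p : X × I => mk h p.1 p.2 :=
  continuous_quot_mk

def map (φ : C(X, Y)) {h₁ : X → X} {h₂ : Y → Y} (hφ : ∀ x, φ (h₁ x) = h₂ (φ x)) :
    C(MappingTorus h₁, MappingTorus h₂) where
  toFun := Quot.lift (fun p => mk h₂ (φ p.1) p.2) (by
    rintro _ _ ⟨x⟩
    simp only [mk_one, hφ])
  continuous_toFun := continuous_quot_lift _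
    ((continuous_mk h₂).comp (φ.continuous.prodMap continuous_id))

theorem map_comp_map (φ : C(X, Y)) (ψ : C(Y, Z)) {h₁ : X → X} {h₂ : Y → Y} {h₃ : Z → Z}
    (hφ : ∀ x, φ (h₁ x) = h₂ (φ x)) (hψ : ∀ y, ψ (h₂ y) = h₃ (ψ y)) :
    (map ψ hψ).comp (map φ hφ) = map (ψ.comp φ) fun x => (congrArg ψ (hφ x)).trans (hψ _) := by
  ext ⟨x, s⟩
  rfl

theorem continuous_wind {h : X → X} (hc : Continuous h) :
    Continuous fun p : X × ℝ => wind h p.1 p.2 := by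
  refine Continuous.if_le ?_ ?_ continuous_snd continuous_const ?_
  · exact (continuous_mk h).comp
      (continuous_fst.prodMk ((continuous_projIcc (h := zero_le_one)).comp continuous_snd))
  · exact (continuous_mk h).comp ((hc.comp continuous_fst).prodMk
      ((continuous_projIcc (h := zero_le_one)).comp (continuous_snd.sub continuous_const)))
  · rintro ⟨x, u⟩ (rfl : u = 1)
    simp [mk_one]

noncomputable def flowHomotopy (h : C(X, X)) :
    (ContinuousMap.id (MappingTorus h)).Homotopy (map h fun _ => rfl) where
  toFun p := flow h p.1 p.2
  continuous_toFun := isQuotientMap_quot_mk.continuous_lift_prod_right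
    ((continuous_wind h.continuous).comp
      (f := fun p : I × X × I => (p.2.1, (p.2.2 : ℝ) + p.1)) (by fun_prop))
  map_zero_left := Quot.ind fun ⟨x, s⟩ => by
    show wind h x (s + (0 : I)) = mk h x s
    rw [Icc.coe_zero, add_zero, wind_coe]
  map_one_left := Quot.ind fun ⟨x, s⟩ => by
    show wind h x (s + 1) = mk h (h x) s
    rw [add_comm, wind_one_add, wind_coe]

end MappingTorus

open MappingTorus in
/-- For continuous maps `f : X → Y` and `g : Y → X`, the mapping tori `T(X, g ∘ f)` and
`T(Y, f ∘ g)` are homotopy equivalent. -/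
theorem mappingTorus_comp_homotopyEquiv
    {X Y : Type*} [TopologicalSpace X] [TopologicalSpace Y]
    (f : C(X, Y)) (g : C(Y, X)) :
    Nonempty (ContinuousMap.HomotopyEquiv
      (MappingTorus (fun x => g (f x)))
      (MappingTorus (fun y => f (g y)))) :=
  ⟨{ toFun := map f (h₂ := fun y => f (g y)) fun _ => rfl
     invFun := map g (h₂ := fun x => g (f x)) fun _ => rfl
     left_inv := by
       rw [map_comp_map]
       exact ⟨(flowHomotopy (g.comp f)).symm⟩
     right_inv := by
       rw [map_comp_map]
       exact ⟨(flowHomotopy (f.comp g)).symm⟩ }⟩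
end

section
/- Let R be a ring, and let C₀, ..., Cₙ be finitely generated projective R-modules forming a chain complex C_* dominating a chain complex A_* via chain maps i : A_* → C_* and r : C_* → A_* with a chain homotopy s satisfying s∂ + ∂s = 1 − r∘i. Set F = C₀ ⊕ C₁ ⊕ ⋯ ⊕ Cₙ. Then the R-module endomorphism P of F given by the matrix with rows (ir, ∂, 0, ...), (isr, 1−ir, −∂, 0, ...), (is²r, −isr, ir, ∂, 0, ...), (is³r, −is²r, isr, 1−ir, −∂, ...), etc., satisfies P² = P. -/
open DirectSum

section

variable {R : Type} [Ring R]
variable (A : ℤ → Type) [∀ k, AddCommGroup (A k)] [∀ k, Module R (A k)]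
variable (C : ℤ → Type) [∀ k, AddCommGroup (C k)] [∀ k, Module R (C k)]

/-- Transport along an equality of degrees. -/
def acast : ∀ {j k : ℤ}, j = k → (A j →ₗ[R] A k)
  | _, _, rfl => LinearMap.id

variable (s : ∀ k : ℤ, A k →ₗ[R] A (k + 1))

/-- Iterates `s^m : A k → A (k+m)` of the chain homotopy `s`. -/
def spow : ∀ (m : ℕ) (k : ℤ), A k →ₗ[R] A (k + (m : ℤ))
  | 0, k => acast A (by simp)
  | m + 1, k => acast A (by push_cast; ring) ∘ₗ s (k + (m : ℤ)) ∘ₗ spow m k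

variable (dC : ∀ k : ℤ, C (k + 1) →ₗ[R] C k)
variable (i : ∀ k : ℤ, A k →ₗ[R] C k) (r : ∀ k : ℤ, C k →ₗ[R] A k)

/-- The `(a,b)` entry of Ranicki's idempotent matrix `P`:
row `a`, column `b`, with rows `(ir, ∂, 0, …)`, `(isr, 1−ir, −∂, 0, …)`,
`(is²r, −isr, ir, ∂, …)`, `(is³r, −is²r, isr, 1−ir, −∂, …)`, … . -/
noncomputable def entry (a b : ℤ) : C b →ₗ[R] C a :=
  if h1 : a + 1 = b then
    ((-1 : ℤ) ^ a.toNat) • (dC a ∘ₗ acast C h1.symm)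
  else if h2 : a = b then
    (if Even a then i a ∘ₗ r a else LinearMap.id - i a ∘ₗ r a) ∘ₗ acast C h2.symm
  else if h3 : b < a then
    ((-1 : ℤ) ^ b.toNat) •
      (i a ∘ₗ acast A (show b + ((a - b).toNat : ℤ) = a by
          rw [Int.toNat_of_nonneg (by omega)]; ring) ∘ₗ
        spow A s (a - b).toNat b ∘ₗ r b)
  else 0

end

/-!
Split `P = O + U + T`, where `O` is the projection onto the odd-degree summands, `U` is the
superdiagonal with entries `(-1)^a ∂`, and `T` is the lower triangle (diagonal included) with
entries `(-1)^b i s^(a-b) r`. Then `O² = O`, `U² = 0` and `OU + UO = U` are immediate, while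
substituting `ri = 1 - (∂s + s∂)` into `T²` produces an alternating telescoping sum whose end
terms cancel `TU + UT`, leaving `T² + TU + UT + OT + TO = T`. In any ring these four relations
force `(O + U + T)² = O + U + T`. The blocks are indexed by all of `ℤ`; since `C` vanishes outside
degrees `0, …, n`, the products of the truncated matrices on `F` are the truncated products.
-/

lemma isIdempotentElem_add_add {S : Type*} [Ring S] {o u t : S} (ho : o * o = o)
    (hu : u * u = 0) (hou : o * u + u * o = u)
    (ht : t * t + t * u + u * t + o * t + t * o = t) : IsIdempotentElem (o + u + t) := by
  calc (o + u + t) * (o + u + t)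
      = o * o + (o * u + u * o) + u * u + (t * t + t * u + u * t + o * t + t * o) := by
        noncomm_ring
    _ = o + u + t := by rw [ho, hou, hu, ht, add_zero]

lemma Finset.sum_Icc_add_one_sub {M : Type*} [AddCommGroup M] (f : ℤ → M) {b c : ℤ}
    (h : b ≤ c + 1) : ∑ a ∈ Icc b c, (f (a + 1) - f a) = f (c + 1) - f b := by
  induction c, (show b - 1 ≤ c by omega) using Int.leInduction with
  | base => simp
  | succ c hc ih =>
    rw [← insert_Icc_right_eq_Icc_add_one (by omega), sum_insert (by simp), ih (by omega)]
    abel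

lemma Fin.sum_univ_eq_sum_Icc_intCast {M : Type*} [AddCommMonoid M] (n : ℕ) (f : ℤ → M) :
    ∑ j : Fin (n + 1), f j = ∑ a ∈ Finset.Icc 0 (n : ℤ), f a := by
  refine Finset.sum_nbij' (fun j => (j : ℤ)) (fun a => Fin.ofNat (n + 1) a.toNat)
    (fun j _ => ?_) (fun _ _ => Finset.mem_univ _) (fun j _ => ?_) (fun a ha => ?_)
    (fun _ _ => rfl)
  · simp only [Finset.mem_Icc]
    omega
  · ext
    simp
  · simp only [Finset.mem_Icc] at ha
    rw [Fin.val_ofNat, Nat.mod_eq_of_lt (by omega)]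
    omega

namespace Int

lemma coe_negOnePow_mul_self (k : ℤ) : (k.negOnePow : ℤ) * k.negOnePow = 1 := by
  rw [← Units.val_mul, units_mul_self, Units.val_one]

lemma coe_negOnePow_eq_one_sub_two_mul (k : ℤ) :
    (k.negOnePow : ℤ) = 1 - 2 * if Odd k then 1 else 0 := by
  rcases even_or_odd k with h | h
  · rw [negOnePow_even k h, if_neg (not_odd_iff_even.2 h)]; rfl
  · rw [negOnePow_odd k h, if_pos h]; rfl

lemma neg_one_pow_toNat {k : ℤ} (hk : 0 ≤ k) : (-1 : ℤ) ^ k.toNat = k.negOnePow := by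
  rw [← coe_negOnePow_natCast, toNat_of_nonneg hk]

lemma sum_Icc_coe_negOnePow {b c : ℤ} (h : b ≤ c) :
    ∑ a ∈ Finset.Icc b c, (a.negOnePow : ℤ) =
      1 - (if Odd b then 1 else 0) - (if Odd c then 1 else 0) := by
  have htel := Finset.sum_Icc_add_one_sub (fun a => (a.negOnePow : ℤ)) (by omega : b ≤ c + 1)
  simp only [negOnePow_succ, Units.val_neg, Finset.sum_sub_distrib,
    Finset.sum_neg_distrib] at htel
  rw [coe_negOnePow_eq_one_sub_two_mul b, coe_negOnePow_eq_one_sub_two_mul c] at htel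
  linarith

end Int

section BlockEnd

variable {R : Type*} [Ring R] {ι : Type*} [Fintype ι] [DecidableEq ι] {D : ι → Type*}
  [∀ j, AddCommGroup (D j)] [∀ j, Module R (D j)]

def blockEnd (M : ∀ a b : ι, D b →ₗ[R] D a) : Module.End R (⨁ j, D j) :=
  toModule R ι _ fun b => ∑ a, lof R ι D a ∘ₗ M a b

lemma blockEnd_lof (M : ∀ a b : ι, D b →ₗ[R] D a) (b : ι) (x : D b) :
    blockEnd M (lof R ι D b x) = ∑ a, lof R ι D a (M a b x) := by
  simp [blockEnd, LinearMap.sum_apply]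

lemma blockEnd_zero : blockEnd (fun _ _ => 0 : ∀ a b : ι, D b →ₗ[R] D a) = 0 := by
  ext b x
  simp [blockEnd_lof]

lemma blockEnd_add (M N : ∀ a b : ι, D b →ₗ[R] D a) :
    blockEnd M + blockEnd N = blockEnd fun a b => M a b + N a b := by
  ext b x
  simp [blockEnd_lof, Finset.sum_add_distrib]

lemma blockEnd_mul (M N : ∀ a b : ι, D b →ₗ[R] D a) :
    blockEnd M * blockEnd N = blockEnd fun c b => ∑ a, M c a ∘ₗ N a b := by
  refine linearMap_ext _ fun b => LinearMap.ext fun x => ?_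
  simp only [LinearMap.coe_comp, Function.comp_apply, Module.End.mul_apply, blockEnd_lof,
    map_sum, LinearMap.sum_apply]
  exact Finset.sum_comm

end BlockEnd

section Graded

variable {R : Type} [Ring R]

lemma acast_rfl (X : ℤ → Type) [∀ k, AddCommGroup (X k)] [∀ k, Module R (X k)] {k : ℤ}
    (h : k = k) : acast (R := R) X h = LinearMap.id := rfl

lemma acast_comp_acast (X : ℤ → Type) [∀ k, AddCommGroup (X k)] [∀ k, Module R (X k)]
    {j k l : ℤ} (h₁ : j = k) (h₂ : k = l) :
    acast (R := R) X h₂ ∘ₗ acast X h₁ = acast X (h₁.trans h₂) := by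
  subst h₁ h₂
  rfl

section Bdry

variable {X Y : ℤ → Type} [∀ k, AddCommGroup (X k)] [∀ k, Module R (X k)]
  [∀ k, AddCommGroup (Y k)] [∀ k, Module R (Y k)]

-- A boundary between arbitrary degrees (zero unless `c = b + 1`): blocks of a matrix over
-- `⨁ C k` can then be composed without transport along equalities of degrees.
def bdry (d : ∀ k : ℤ, X (k + 1) →ₗ[R] X k) (c b : ℤ) : X c →ₗ[R] X b :=
  if h : c = b + 1 then d b ∘ₗ acast X h else 0

variable (d : ∀ k : ℤ, X (k + 1) →ₗ[R] X k)

lemma bdry_succ (b : ℤ) : bdry d (b + 1) b = d b := by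
  rw [bdry, dif_pos rfl, acast_rfl]
  rfl

lemma bdry_of_eq {c b : ℤ} (h : c = b + 1) : bdry d c b = d b ∘ₗ acast X h := dif_pos h

lemma bdry_of_ne {c b : ℤ} (h : c ≠ b + 1) : bdry d c b = 0 := dif_neg h

lemma bdry_comp_bdry
    (hd : ∀ k, d k ∘ₗ d (k + 1) ∘ₗ acast X (show k + 2 = k + 1 + 1 by ring) = 0)
    (a b c : ℤ) : bdry d b a ∘ₗ bdry d c b = 0 := by
  by_cases hb : b = a + 1
  · by_cases hc : c = b + 1
    · subst hb hc
      have uncast : ∀ m (e : m = a + 1 + 1), d a ∘ₗ d (a + 1) ∘ₗ acast X e = 0 →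
          d a ∘ₗ d (a + 1) = 0 := by
        rintro m rfl h
        exact h
      rw [bdry_succ, bdry_succ]
      exact uncast _ _ (hd a)
    · rw [bdry_of_ne d hc, LinearMap.comp_zero]
  · rw [bdry_of_ne d hb, LinearMap.zero_comp]

lemma comp_bdry {d' : ∀ k : ℤ, Y (k + 1) →ₗ[R] Y k} {f : ∀ k, X k →ₗ[R] Y k}
    (hf : ∀ k, f k ∘ₗ d k = d' k ∘ₗ f (k + 1)) (c b : ℤ) :
    f b ∘ₗ bdry d c b = bdry d' c b ∘ₗ f c := by
  by_cases h : c = b + 1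
  · subst h
    rw [bdry_succ, bdry_succ, hf]
  · rw [bdry_of_ne d h, bdry_of_ne d' h, LinearMap.comp_zero, LinearMap.zero_comp]

end Bdry

section SIter

variable {A : ℤ → Type} [∀ k, AddCommGroup (A k)] [∀ k, Module R (A k)]
  (s : ∀ k : ℤ, A k →ₗ[R] A (k + 1))

def sIter (b c : ℤ) : A b →ₗ[R] A c :=
  if h : b ≤ c then
    acast A (show b + ((c - b).toNat : ℤ) = c by omega) ∘ₗ spow A s (c - b).toNat b
  else 0

lemma sIter_of_lt {b c : ℤ} (h : c < b) : sIter s b c = 0 := dif_neg (by omega)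

lemma spow_congr {m m' : ℕ} (h : m = m') (b : ℤ) :
    spow A s m' b = acast A (by rw [h]) ∘ₗ spow A s m b := by
  subst h
  rfl

lemma s_comp_acast {j k : ℤ} (h : j = k) :
    s k ∘ₗ acast A h = acast A (congrArg (· + 1) h) ∘ₗ s j := by
  subst h
  rfl

lemma sIter_self (b : ℤ) : sIter s b b = LinearMap.id := by
  rw [sIter, dif_pos le_rfl, spow_congr s (show 0 = (b - b).toNat by omega), spow,
    acast_comp_acast, acast_comp_acast]
  rfl

lemma sIter_succ {b c : ℤ} (h : b ≤ c) : sIter s b (c + 1) = s c ∘ₗ sIter s b c := by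
  rw [sIter, sIter, dif_pos h, dif_pos (by omega : b ≤ c + 1),
    spow_congr s (show (c - b).toNat + 1 = (c + 1 - b).toNat by omega)]
  have hb : b + ((c - b).toNat : ℤ) = c := by omega
  conv_lhs => rw [← LinearMap.comp_assoc, acast_comp_acast, spow, ← LinearMap.comp_assoc,
    acast_comp_acast]
  simp only [← LinearMap.comp_assoc, s_comp_acast s hb]

lemma sIter_of_add_one_eq {b c : ℤ} (h : b + 1 = c) : sIter s b c = acast A h ∘ₗ s b := by
  subst h
  rw [sIter_succ s le_rfl, sIter_self]
  rfl

lemma sIter_comp {a b c : ℤ} (hab : a ≤ b) (hbc : b ≤ c) :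
    sIter s b c ∘ₗ sIter s a b = sIter s a c := by
  induction c, hbc using Int.leInduction with
  | base => rw [sIter_self, LinearMap.id_comp]
  | succ c hbc ih =>
    rw [sIter_succ s hbc, sIter_succ s (hab.trans hbc), LinearMap.comp_assoc, ih]

lemma sIter_comp_assoc {M : Type} [AddCommGroup M] [Module R M] {a b c : ℤ} (hab : a ≤ b)
    (hbc : b ≤ c) (f : M →ₗ[R] A a) : sIter s b c ∘ₗ sIter s a b ∘ₗ f = sIter s a c ∘ₗ f := by
  rw [← LinearMap.comp_assoc, sIter_comp s hab hbc]

end SIter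

section Blocks

variable {A C : ℤ → Type} [∀ k, AddCommGroup (A k)] [∀ k, Module R (A k)]
  [∀ k, AddCommGroup (C k)] [∀ k, Module R (C k)]
  (s : ∀ k : ℤ, A k →ₗ[R] A (k + 1)) (dA : ∀ k : ℤ, A (k + 1) →ₗ[R] A k)
  (dC : ∀ k : ℤ, C (k + 1) →ₗ[R] C k) (i : ∀ k : ℤ, A k →ₗ[R] C k)
  (r : ∀ k : ℤ, C k →ₗ[R] A k)

variable (C) in
def oddBlock (a b : ℤ) : C b →ₗ[R] C a :=
  if h : b = a ∧ Odd a then acast C h.1 else 0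

def bdryBlock (a b : ℤ) : C b →ₗ[R] C a := (a.negOnePow : ℤ) • bdry dC b a

def transferBlock (a b : ℤ) : C b →ₗ[R] C a :=
  (b.negOnePow : ℤ) • (i a ∘ₗ sIter s b a ∘ₗ r b)

-- `i ∘ s^(c-a+1) ∘ ∂ ∘ s^(a-b) ∘ r`: the homotopy formula splits the `a`-th term of `T²`
-- into two of these, which then telescope.
def cornerTerm (b c a : ℤ) : C b →ₗ[R] C c :=
  i c ∘ₗ sIter s (a - 1) c ∘ₗ bdry dA a (a - 1) ∘ₗ sIter s b a ∘ₗ r b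

lemma transferBlock_of_lt {a b : ℤ} (h : a < b) : transferBlock s i r a b = 0 := by
  rw [transferBlock, sIter_of_lt s h, LinearMap.zero_comp, LinearMap.comp_zero, smul_zero]

lemma entry_eq_add_blocks {a b : ℤ} (ha : 0 ≤ a) (hb : 0 ≤ b) :
    entry A C s dC i r a b = oddBlock C a b + bdryBlock dC a b + transferBlock s i r a b := by
  rcases lt_trichotomy b a with hlt | rfl | hgt
  · rw [entry, dif_neg (by omega), dif_neg (by omega), dif_pos hlt, oddBlock,
      dif_neg fun h => hlt.ne h.1, bdryBlock, bdry_of_ne dC (by omega), smul_zero, zero_add,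
      zero_add, transferBlock, sIter, dif_pos hlt.le, Int.neg_one_pow_toNat hb,
      LinearMap.comp_assoc]
  · rw [entry, dif_neg (by omega), dif_pos rfl, acast_rfl, LinearMap.comp_id, bdryBlock,
      bdry_of_ne dC (by omega), smul_zero, add_zero, transferBlock, sIter_self,
      LinearMap.id_comp, oddBlock]
    rcases Int.even_or_odd b with h | h
    · rw [if_pos h, dif_neg fun h' => Int.not_odd_iff_even.2 h h'.2, Int.negOnePow_even _ h,
        zero_add, Units.val_one, one_smul]
    · rw [if_neg (Int.not_even_iff_odd.2 h), dif_pos ⟨rfl, h⟩, Int.negOnePow_odd _ h,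
        acast_rfl, Units.val_neg, Units.val_one, neg_smul, one_smul, sub_eq_add_neg]
  · rw [oddBlock, dif_neg fun h => hgt.ne' h.1, transferBlock_of_lt s i r hgt, add_zero,
      zero_add, bdryBlock]
    by_cases h : a + 1 = b
    · rw [entry, dif_pos h, bdry_of_eq dC h.symm, Int.neg_one_pow_toNat ha]
    · rw [entry, dif_neg h, dif_neg (by omega), dif_neg (by omega), bdry_of_ne dC (by omega),
        smul_zero]

lemma bdryBlock_comp_bdryBlock
    (hdC : ∀ k, dC k ∘ₗ dC (k + 1) ∘ₗ acast C (show k + 2 = k + 1 + 1 by ring) = 0)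
    (a b c : ℤ) : bdryBlock dC c a ∘ₗ bdryBlock dC a b = 0 := by
  rw [bdryBlock, bdryBlock, LinearMap.smul_comp, LinearMap.comp_smul, bdry_comp_bdry dC hdC,
    smul_zero, smul_zero]

lemma transferBlock_comp_bdryBlock (hr : ∀ k, r k ∘ₗ dC k = dA k ∘ₗ r (k + 1)) (b c : ℤ) :
    transferBlock s i r c (b - 1) ∘ₗ bdryBlock dC (b - 1) b = cornerTerm s dA i r b c b := by
  rw [transferBlock, bdryBlock, LinearMap.smul_comp, LinearMap.comp_smul, smul_smul,
    Int.coe_negOnePow_mul_self, one_smul, cornerTerm, sIter_self, LinearMap.id_comp]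
  simp only [LinearMap.comp_assoc]
  rw [comp_bdry dC hr]

lemma bdryBlock_comp_transferBlock (hi : ∀ k, i k ∘ₗ dA k = dC k ∘ₗ i (k + 1)) (b c : ℤ) :
    bdryBlock dC c (c + 1) ∘ₗ transferBlock s i r (c + 1) b =
      ((c.negOnePow : ℤ) * b.negOnePow) • cornerTerm s dA i r b c (c + 1) := by
  rw [transferBlock, bdryBlock, LinearMap.smul_comp, LinearMap.comp_smul, smul_smul,
    cornerTerm, add_sub_cancel_right, sIter_self, LinearMap.id_comp, ← LinearMap.comp_assoc,
    ← comp_bdry dA hi]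
  simp only [LinearMap.comp_assoc]

section Homotopy

variable (hs : ∀ k : ℤ, dA k ∘ₗ s k +
      acast A (show k - 1 + 1 = k by ring) ∘ₗ s (k - 1) ∘ₗ dA (k - 1) ∘ₗ
        acast A (show k = k - 1 + 1 by ring) =
      LinearMap.id - r k ∘ₗ i k)
include hs

lemma r_comp_i_eq (k : ℤ) :
    r k ∘ₗ i k = LinearMap.id - bdry dA (k + 1) k ∘ₗ sIter s k (k + 1) -
      sIter s (k - 1) k ∘ₗ bdry dA k (k - 1) := by
  rw [bdry_succ, sIter_succ s le_rfl, sIter_self, LinearMap.comp_id,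
    sIter_of_add_one_eq s (sub_add_cancel k 1), bdry_of_eq dA (sub_add_cancel k 1).symm,
    sub_sub, LinearMap.comp_assoc, hs k, sub_sub_cancel]

lemma transferBlock_comp_transferBlock {a b c : ℤ} (hba : b ≤ a) (hac : a ≤ c) :
    transferBlock s i r c a ∘ₗ transferBlock s i r a b =
      ((a.negOnePow : ℤ) * b.negOnePow) • (i c ∘ₗ sIter s b c ∘ₗ r b -
        cornerTerm s dA i r b c (a + 1) - cornerTerm s dA i r b c a) := by
  rw [transferBlock, transferBlock, LinearMap.smul_comp, LinearMap.comp_smul, smul_smul]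
  congr 1
  simp only [LinearMap.comp_assoc]
  rw [← LinearMap.comp_assoc _ (i a) (r a), r_comp_i_eq s dA i r hs a]
  simp only [LinearMap.sub_comp, LinearMap.comp_sub, LinearMap.id_comp, LinearMap.comp_assoc]
  rw [sIter_comp_assoc s hba hac, sIter_comp_assoc s hba (by omega : a ≤ a + 1),
    sIter_comp_assoc s (by omega : a - 1 ≤ a) hac, cornerTerm, cornerTerm, add_sub_cancel_right]

lemma sum_transferBlock_comp_transferBlock {b c : ℤ} (hbc : b ≤ c) :
    ∑ a ∈ Finset.Icc b c, transferBlock s i r c a ∘ₗ transferBlock s i r a b =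
      (b.negOnePow : ℤ) •
        ((∑ a ∈ Finset.Icc b c, (a.negOnePow : ℤ)) • (i c ∘ₗ sIter s b c ∘ₗ r b) -
          (c.negOnePow : ℤ) • cornerTerm s dA i r b c (c + 1) -
          (b.negOnePow : ℤ) • cornerTerm s dA i r b c b) := by
  set Y := cornerTerm s dA i r b c
  have htel :=
    Finset.sum_Icc_add_one_sub (fun a => (a.negOnePow : ℤ) • Y a) (by omega : b ≤ c + 1)
  have hterm : ∀ a ∈ Finset.Icc b c, transferBlock s i r c a ∘ₗ transferBlock s i r a b =
      (b.negOnePow : ℤ) • ((a.negOnePow : ℤ) • (i c ∘ₗ sIter s b c ∘ₗ r b)) +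
        (b.negOnePow : ℤ) • (((a + 1).negOnePow : ℤ) • Y (a + 1) - (a.negOnePow : ℤ) • Y a) := by
    intro a ha
    rw [Finset.mem_Icc] at ha
    rw [transferBlock_comp_transferBlock s dA i r hs ha.1 ha.2, Int.negOnePow_succ,
      Units.val_neg]
    module
  rw [Finset.sum_congr rfl hterm, Finset.sum_add_distrib, ← Finset.smul_sum, ← Finset.smul_sum,
    ← Finset.sum_smul, htel, Int.negOnePow_succ, Units.val_neg]
  module

lemma transferBlock_relation (hi : ∀ k, i k ∘ₗ dA k = dC k ∘ₗ i (k + 1))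
    (hr : ∀ k, r k ∘ₗ dC k = dA k ∘ₗ r (k + 1)) (b c : ℤ) :
    ∑ a ∈ Finset.Icc b c, transferBlock s i r c a ∘ₗ transferBlock s i r a b +
      transferBlock s i r c (b - 1) ∘ₗ bdryBlock dC (b - 1) b +
      bdryBlock dC c (c + 1) ∘ₗ transferBlock s i r (c + 1) b +
      (if Odd c then transferBlock s i r c b else 0) +
      (if Odd b then transferBlock s i r c b else 0) = transferBlock s i r c b := by
  rw [transferBlock_comp_bdryBlock s dA dC i r hr, bdryBlock_comp_transferBlock s dA dC i r hi]
  rcases lt_or_ge c b with hcb | hbc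
  · rw [Finset.Icc_eq_empty_of_lt hcb, Finset.sum_empty, transferBlock_of_lt s i r hcb,
      ite_self, ite_self, zero_add, add_zero, add_zero]
    rcases (show b = c + 1 ∨ c + 1 < b by omega) with rfl | hlt
    · rw [Int.negOnePow_succ, Units.val_neg, mul_neg, Int.coe_negOnePow_mul_self]
      module
    · rw [cornerTerm, cornerTerm, sIter_of_lt s (by omega : c < b - 1),
        sIter_of_lt s (by omega : c + 1 < b)]
      simp
  · rw [sum_transferBlock_comp_transferBlock s dA i r hs hbc, Int.sum_Icc_coe_negOnePow hbc,
      ← one_smul ℤ (transferBlock s i r c b), ← zero_smul ℤ (transferBlock s i r c b),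
      ← ite_smul, ← ite_smul, transferBlock]
    linear_combination (norm := module)
      -(Int.coe_negOnePow_mul_self b • cornerTerm s dA i r b c b)

end Homotopy

section Truncation

variable (n : ℕ)

def truncBlockEnd (M : ∀ a b : ℤ, C b →ₗ[R] C a) : Module.End R (⨁ j : Fin (n + 1), C j) :=
  blockEnd fun a b : Fin (n + 1) => M a b

lemma truncBlockEnd_zero : truncBlockEnd n (fun _ _ => 0 : ∀ a b : ℤ, C b →ₗ[R] C a) = 0 :=
  blockEnd_zero

lemma truncBlockEnd_add (M N : ∀ a b : ℤ, C b →ₗ[R] C a) :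
    truncBlockEnd n M + truncBlockEnd n N = truncBlockEnd n fun a b => M a b + N a b :=
  blockEnd_add _ _

lemma truncBlockEnd_mul (M N : ∀ a b : ℤ, C b →ₗ[R] C a) :
    truncBlockEnd n M * truncBlockEnd n N =
      truncBlockEnd n fun c b => ∑ a ∈ Finset.Icc 0 (n : ℤ), M c a ∘ₗ N a b := by
  rw [truncBlockEnd, truncBlockEnd, blockEnd_mul, truncBlockEnd]
  congr
  funext c b
  exact Fin.sum_univ_eq_sum_Icc_intCast n fun a => M c a ∘ₗ N a b

lemma truncBlockEnd_congr {M N : ∀ a b : ℤ, C b →ₗ[R] C a}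
    (h : ∀ a ∈ Finset.Icc 0 (n : ℤ), ∀ b ∈ Finset.Icc 0 (n : ℤ), M a b = N a b) :
    truncBlockEnd n M = truncBlockEnd n N := by
  rw [truncBlockEnd, truncBlockEnd]
  congr
  funext a b
  exact h a (by simp only [Finset.mem_Icc]; omega) b (by simp only [Finset.mem_Icc]; omega)

variable {X : Type} [AddCommGroup X] [Module R X]

lemma sum_oddBlock_comp {c : ℤ} (hc : c ∈ Finset.Icc 0 (n : ℤ)) (f : ∀ a, X →ₗ[R] C a) :
    ∑ a ∈ Finset.Icc 0 (n : ℤ), oddBlock C c a ∘ₗ f a = if Odd c then f c else 0 := by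
  rw [Finset.sum_eq_single c
    (fun a _ hac => by rw [oddBlock, dif_neg fun h => hac h.1, LinearMap.zero_comp])
    (fun h => (h hc).elim), oddBlock]
  by_cases h : Odd c
  · rw [dif_pos ⟨rfl, h⟩, if_pos h, acast_rfl, LinearMap.id_comp]
  · rw [dif_neg fun h' => h h'.2, if_neg h, LinearMap.zero_comp]

lemma sum_comp_oddBlock {b : ℤ} (hb : b ∈ Finset.Icc 0 (n : ℤ)) (g : ∀ a, C a →ₗ[R] X) :
    ∑ a ∈ Finset.Icc 0 (n : ℤ), g a ∘ₗ oddBlock C a b = if Odd b then g b else 0 := by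
  rw [Finset.sum_eq_single b
    (fun a _ hab => by rw [oddBlock, dif_neg fun h => hab h.1.symm, LinearMap.comp_zero])
    (fun h => (h hb).elim), oddBlock]
  by_cases h : Odd b
  · rw [dif_pos ⟨rfl, h⟩, if_pos h, acast_rfl, LinearMap.comp_id]
  · rw [dif_neg fun h' => h h'.2, if_neg h, LinearMap.comp_zero]

lemma sum_transferBlock_comp_transferBlock_eq_sum_Icc {b c : ℤ} (hb : 0 ≤ b) (hc : c ≤ n) :
    ∑ a ∈ Finset.Icc 0 (n : ℤ), transferBlock s i r c a ∘ₗ transferBlock s i r a b =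
      ∑ a ∈ Finset.Icc b c, transferBlock s i r c a ∘ₗ transferBlock s i r a b := by
  refine (Finset.sum_subset (Finset.Icc_subset_Icc hb hc) fun a _ ha => ?_).symm
  rw [Finset.mem_Icc, not_and_or, not_le, not_le] at ha
  rcases ha with hab | hca
  · rw [transferBlock_of_lt s i r hab, LinearMap.comp_zero]
  · rw [transferBlock_of_lt s i r hca, LinearMap.zero_comp]

lemma truncBlockEnd_oddBlock_mul_self :
    truncBlockEnd n (oddBlock C) * truncBlockEnd n (oddBlock C) =
      truncBlockEnd n (oddBlock (R := R) C) := by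
  rw [truncBlockEnd_mul]
  refine truncBlockEnd_congr n fun c hc b _ => ?_
  rw [sum_oddBlock_comp n hc]
  by_cases h : Odd c
  · rw [if_pos h]
  · rw [if_neg h, oddBlock, dif_neg fun h' => h h'.2]

lemma truncBlockEnd_oddBlock_anticomm :
    truncBlockEnd n (oddBlock C) * truncBlockEnd n (bdryBlock dC) +
      truncBlockEnd n (bdryBlock dC) * truncBlockEnd n (oddBlock C) =
        truncBlockEnd n (bdryBlock dC) := by
  simp only [truncBlockEnd_mul, truncBlockEnd_add]
  refine truncBlockEnd_congr n fun c hc b hb => ?_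
  rw [sum_oddBlock_comp n hc, sum_comp_oddBlock n hb]
  by_cases h : b = c + 1
  · subst h
    by_cases hc : Even c <;> simp [← Int.not_even_iff_odd, hc]
  · simp [bdryBlock, bdry_of_ne dC h]

variable (hC : ∀ k : ℤ, (k < 0 ∨ (n : ℤ) < k) → Subsingleton (C k))
include hC

lemma sum_bdryBlock_comp (c : ℤ) (f : ∀ a, X →ₗ[R] C a) :
    ∑ a ∈ Finset.Icc 0 (n : ℤ), bdryBlock dC c a ∘ₗ f a =
      bdryBlock dC c (c + 1) ∘ₗ f (c + 1) := by
  refine Finset.sum_eq_single (c + 1)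
    (fun a _ ha => by rw [bdryBlock, bdry_of_ne dC ha, smul_zero, LinearMap.zero_comp])
    (fun h => ?_)
  have : Subsingleton (C (c + 1)) := hC _ (by simp only [Finset.mem_Icc] at h; omega)
  rw [Subsingleton.elim (bdryBlock dC c (c + 1)) 0, LinearMap.zero_comp]

lemma sum_comp_bdryBlock (b : ℤ) (g : ∀ a, C a →ₗ[R] X) :
    ∑ a ∈ Finset.Icc 0 (n : ℤ), g a ∘ₗ bdryBlock dC a b =
      g (b - 1) ∘ₗ bdryBlock dC (b - 1) b := by
  refine Finset.sum_eq_single (b - 1)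
    (fun a _ ha => by rw [bdryBlock, bdry_of_ne dC (by omega), smul_zero, LinearMap.comp_zero])
    (fun h => ?_)
  have : Subsingleton (C (b - 1)) := hC _ (by simp only [Finset.mem_Icc] at h; omega)
  rw [Subsingleton.elim (bdryBlock dC (b - 1) b) 0, LinearMap.comp_zero]

lemma truncBlockEnd_bdryBlock_mul_self
    (hdC : ∀ k, dC k ∘ₗ dC (k + 1) ∘ₗ acast C (show k + 2 = k + 1 + 1 by ring) = 0) :
    truncBlockEnd n (bdryBlock dC) * truncBlockEnd n (bdryBlock dC) = 0 := by
  rw [truncBlockEnd_mul, ← truncBlockEnd_zero n]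
  refine truncBlockEnd_congr n fun c _ b _ => ?_
  rw [sum_bdryBlock_comp dC n hC, bdryBlock_comp_bdryBlock dC hdC]

lemma truncBlockEnd_transferBlock_relation (hi : ∀ k, i k ∘ₗ dA k = dC k ∘ₗ i (k + 1))
    (hr : ∀ k, r k ∘ₗ dC k = dA k ∘ₗ r (k + 1))
    (hs : ∀ k : ℤ, dA k ∘ₗ s k +
      acast A (show k - 1 + 1 = k by ring) ∘ₗ s (k - 1) ∘ₗ dA (k - 1) ∘ₗ
        acast A (show k = k - 1 + 1 by ring) =
      LinearMap.id - r k ∘ₗ i k) :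
    let T := truncBlockEnd n (transferBlock s i r)
    let U := truncBlockEnd n (bdryBlock dC)
    let O := truncBlockEnd n (oddBlock C)
    T * T + T * U + U * T + O * T + T * O = T := by
  simp only [truncBlockEnd_mul, truncBlockEnd_add]
  refine truncBlockEnd_congr n fun c hc b hb => ?_
  rw [sum_oddBlock_comp n hc, sum_comp_oddBlock n hb]
  rw [Finset.mem_Icc] at hc hb
  rw [sum_transferBlock_comp_transferBlock_eq_sum_Icc s i r n hb.1 hc.2,
    sum_comp_bdryBlock dC n hC, sum_bdryBlock_comp dC n hC]
  exact transferBlock_relation s dA dC i r hs hi hr b c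

end Truncation

end Blocks

end Graded

/-- **Ranicki's idempotent.** Let `A`, `C` be chain complexes of `R`-modules with `C`
concentrated in degrees `0, …, n` and consisting of finitely generated projective modules,
`i : A → C` and `r : C → A` chain maps, and `s` a chain homotopy with
`∂s + s∂ = 1 − r∘i` on each `A k`.  Set `F = C₀ ⊕ ⋯ ⊕ Cₙ` and let `P : F → F` be the matrix
with rows `(ir, ∂, 0, …)`, `(isr, 1−ir, −∂, 0, …)`, `(is²r, −isr, ir, ∂, …)`,
`(is³r, −is²r, isr, 1−ir, −∂, …)`, … .  Then `P² = P`. -/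
theorem ranicki_projection_idempotent
    {R : Type} [Ring R] (n : ℕ)
    (A : ℤ → Type) [∀ k, AddCommGroup (A k)] [∀ k, Module R (A k)]
    (C : ℤ → Type) [∀ k, AddCommGroup (C k)] [∀ k, Module R (C k)]
    (dA : ∀ k : ℤ, A (k + 1) →ₗ[R] A k) (dC : ∀ k : ℤ, C (k + 1) →ₗ[R] C k)
    (hdC : ∀ k, dC k ∘ₗ dC (k + 1) ∘ₗ acast C (show k + 2 = k + 1 + 1 by ring) = 0)
    (hCbdd : ∀ k : ℤ, (k < 0 ∨ (n : ℤ) < k) → Subsingleton (C k))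
    (i : ∀ k : ℤ, A k →ₗ[R] C k) (r : ∀ k : ℤ, C k →ₗ[R] A k)
    (hi : ∀ k, i k ∘ₗ dA k = dC k ∘ₗ i (k + 1))
    (hr : ∀ k, r k ∘ₗ dC k = dA k ∘ₗ r (k + 1))
    (s : ∀ k : ℤ, A k →ₗ[R] A (k + 1))
    (hs : ∀ k : ℤ, dA k ∘ₗ s k +
        acast A (show k - 1 + 1 = k by ring) ∘ₗ s (k - 1) ∘ₗ dA (k - 1) ∘ₗ
          acast A (show k = k - 1 + 1 by ring) =
      LinearMap.id - r k ∘ₗ i k)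
    (P : (⨁ j : Fin (n + 1), C (j : ℤ)) →ₗ[R] (⨁ j : Fin (n + 1), C (j : ℤ)))
    (hP : P = DirectSum.toModule R (Fin (n + 1)) _ (fun b =>
      ∑ a : Fin (n + 1),
        DirectSum.lof R (Fin (n + 1)) (fun j : Fin (n + 1) => C (j : ℤ)) a ∘ₗ
          entry A C s dC i r (a : ℤ) (b : ℤ))) :
    P ∘ₗ P = P := by
  have hP_blocks : P = truncBlockEnd n (oddBlock C) + truncBlockEnd n (bdryBlock dC) +
      truncBlockEnd n (transferBlock s i r) := by
    rw [hP, truncBlockEnd_add, truncBlockEnd_add]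
    exact truncBlockEnd_congr n fun a ha b hb =>
      entry_eq_add_blocks s dC i r (Finset.mem_Icc.1 ha).1 (Finset.mem_Icc.1 hb).1
  rw [← Module.End.mul_eq_comp, hP_blocks]
  exact isIdempotentElem_add_add (truncBlockEnd_oddBlock_mul_self n)
    (truncBlockEnd_bdryBlock_mul_self dC n hCbdd hdC) (truncBlockEnd_oddBlock_anticomm dC n)
    (truncBlockEnd_transferBlock_relation s dA dC i r n hCbdd hi hr hs)
end

section
/- Let R be a ring and 0 → Pₙ → Pₙ₋₁ → ⋯ → P₀ → 0 a chain complex of finitely generated projective R-modules with Hᵢ(P_*) = 0 for all i ≤ k (where k < n). Then P_* is chain homotopy equivalent to a chain complex of finitely generated projective R-modules of the form 0 → Pₙ → ⋯ → P_{k+2} → Q → 0. In particular, H_{k+1}(P_*) is a finitely generated R-module. -/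
/-!
Exactness in degrees `≤ k` and projectivity let one choose, degree by degree, maps
`s j : P_j ⟶ P_{j+1}` with `d s + s d = 𝟙` in degrees `≤ k`: the correction `𝟙 - (d s + s d)`
still to be lifted through `d` lands in the cycles, which are boundaries, and `P_j` is
projective. With `s = 0` above `k`, the chain map `e = 𝟙 - (d s + s d)` is homotopic to the
identity, idempotent (since `e ≫ s = 0` degreewise), zero in degrees `≤ k` and the identity in
degrees `≥ k + 2`. Splitting `e` gives a complex `Q` which is a deformation retract of `P`,
degreewise a retract of `P` (hence finitely generated projective), zero in degrees `≤ k`, and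
equal to `P` from degree `k + 2` on. Finally `H_{k+1}(P) ≅ H_{k+1}(Q)` is a quotient of `Q_{k+1}`.
-/

open CategoryTheory Limits

namespace ChainComplex

section Preadditive

variable {C : Type*} [Category C] [Preadditive C] {P D : ChainComplex C ℕ}

noncomputable def nullHomotopicMapOfSucc (s : ∀ j, P.X j ⟶ D.X (j + 1)) : P ⟶ D :=
  Homotopy.nullHomotopicMap' fun i j (h : (ComplexShape.down ℕ).Rel j i) =>
    s i ≫ eqToHom (congrArg D.X h)

variable (s : ∀ j, P.X j ⟶ D.X (j + 1))

lemma nullHomotopicMapOfSucc_f_zero : (nullHomotopicMapOfSucc s).f 0 = s 0 ≫ D.d 1 0 := by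
  rw [nullHomotopicMapOfSucc,
    Homotopy.nullHomotopicMap'_f_of_not_rel_left (c := ComplexShape.down ℕ) rfl (by simp)]
  simp

lemma nullHomotopicMapOfSucc_f_succ (j : ℕ) : (nullHomotopicMapOfSucc s).f (j + 1) =
    P.d (j + 1) j ≫ s j + s (j + 1) ≫ D.d (j + 2) (j + 1) := by
  rw [nullHomotopicMapOfSucc, Homotopy.nullHomotopicMap'_f (c := ComplexShape.down ℕ) rfl rfl]
  simp only [eqToHom_refl, Category.comp_id]
  rfl

lemma comp_nullHomotopicMapOfSucc {E : ChainComplex C ℕ} (φ : E ⟶ P) :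
    φ ≫ nullHomotopicMapOfSucc s = nullHomotopicMapOfSucc fun j => φ.f j ≫ s j := by
  simp only [nullHomotopicMapOfSucc, Homotopy.comp_nullHomotopicMap', Category.assoc]

lemma nullHomotopicMapOfSucc_zero :
    nullHomotopicMapOfSucc (fun j => (0 : P.X j ⟶ D.X (j + 1))) = 0 := by
  ext (_ | j) <;> simp [nullHomotopicMapOfSucc_f_zero, nullHomotopicMapOfSucc_f_succ]

lemma nullHomotopicMapOfSucc_f_congr {s s' : ∀ j, P.X j ⟶ D.X (j + 1)} {j : ℕ}
    (h : ∀ i ≤ j, s i = s' i) :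
    (nullHomotopicMapOfSucc s).f j = (nullHomotopicMapOfSucc s').f j := by
  rcases j with _ | j
  · simp [nullHomotopicMapOfSucc_f_zero, h]
  · simp [nullHomotopicMapOfSucc_f_succ, h]

end Preadditive

section Abelian

variable {C : Type*} [Category C] [Abelian C] (P : ChainComplex C ℕ)

lemma exists_comp_d_eq_of_exactAt {j : ℕ} (hj : P.ExactAt j) {A : C} [Projective A]
    (φ : A ⟶ P.X j) (hφ : φ ≫ P.d j (j - 1) = 0) :
    ∃ t : A ⟶ P.X (j + 1), t ≫ P.d (j + 1) j = φ :=
  have hS := (P.exactAt_iff' (j + 1) j (j - 1) (by simp) (by cases j <;> simp)).mp hj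
  ⟨hS.liftFromProjective φ hφ, hS.liftFromProjective_comp φ hφ⟩

theorem exists_nullHomotopicMapOfSucc_f_eq_id (m : ℕ) (hexact : ∀ j < m, P.ExactAt j)
    (hproj : ∀ j < m, Projective (P.X j)) :
    ∃ s : ∀ j, P.X j ⟶ P.X (j + 1),
      (∀ j < m, (nullHomotopicMapOfSucc s).f j = 𝟙 _) ∧ ∀ j, m ≤ j → s j = 0 := by
  induction m with
  | zero => exact ⟨0, by simp, fun _ _ => rfl⟩
  | succ m ih =>
    obtain ⟨s, hid, hzero⟩ :=
      ih (fun j hj => hexact j (by omega)) (fun j hj => hproj j (by omega))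
    have : Projective (P.X m) := hproj m (by omega)
    obtain ⟨t, ht⟩ := P.exists_comp_d_eq_of_exactAt (hexact m (by omega))
      ((𝟙 _ - nullHomotopicMapOfSucc s).f m) (by
        rw [HomologicalComplex.Hom.comm]
        rcases m with _ | m
        · simp
        · simp [hid m (by omega)])
    refine ⟨Function.update s m t, fun j hj => ?_, fun j hj => ?_⟩
    · rcases (Nat.lt_succ_iff.mp hj).lt_or_eq with hj | rfl
      · rw [← hid j hj]
        exact nullHomotopicMapOfSucc_f_congr fun i hi => Function.update_of_ne (by omega) _ _
      · have hupdate : (nullHomotopicMapOfSucc (Function.update s j t)).f j =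
            (nullHomotopicMapOfSucc s).f j + t ≫ P.d (j + 1) j := by
          rcases j with _ | j <;>
            simp [nullHomotopicMapOfSucc_f_zero, nullHomotopicMapOfSucc_f_succ, hzero _ le_rfl]
        simp [hupdate, ht]
    · rw [Function.update_of_ne (by omega), hzero j (by omega)]

theorem exists_idempotent_homotopic_id_of_exactAt (k : ℕ) (hexact : ∀ j ≤ k, P.ExactAt j)
    (hproj : ∀ j ≤ k, Projective (P.X j)) :
    ∃ e : P ⟶ P, e ≫ e = e ∧ Nonempty (Homotopy e (𝟙 P)) ∧
      (∀ j ≤ k, e.f j = 0) ∧ ∀ j, k + 2 ≤ j → e.f j = 𝟙 _ := by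
  obtain ⟨s, hid, hzero⟩ := P.exists_nullHomotopicMapOfSucc_f_eq_id (k + 1)
    (fun j hj => hexact j (by omega)) (fun j hj => hproj j (by omega))
  have hlow : ∀ j ≤ k, (𝟙 P - nullHomotopicMapOfSucc s).f j = 0 := fun j hj => by
    simp [hid j (by omega)]
  have hkill (j : ℕ) : (𝟙 P - nullHomotopicMapOfSucc s).f j ≫ s j = 0 := by
    rcases le_or_gt j k with hj | hj
    · rw [hlow j hj, zero_comp]
    · rw [hzero j hj, comp_zero]
  refine ⟨𝟙 P - nullHomotopicMapOfSucc s, ?_, ⟨?_⟩, hlow, fun j hj => ?_⟩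
  · rw [Preadditive.comp_sub, Category.comp_id, comp_nullHomotopicMapOfSucc, funext hkill,
      nullHomotopicMapOfSucc_zero, sub_zero]
  · exact (Homotopy.equivSubZero.symm
      ((Homotopy.ofEq (sub_sub_cancel _ _)).trans (Homotopy.nullHomotopy' _))).symm
  · obtain ⟨j, rfl⟩ := Nat.exists_eq_add_of_le' (show 1 ≤ j by omega)
    simp [nullHomotopicMapOfSucc_f_succ, hzero j (by omega), hzero (j + 1) (by omega)]

theorem exists_deformationRetract_of_exactAt (k : ℕ) (hexact : ∀ j ≤ k, P.ExactAt j)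
    (hproj : ∀ j ≤ k, Projective (P.X j)) :
    ∃ (Q : ChainComplex C ℕ) (h : Retract Q P), Nonempty (Homotopy (h.r ≫ h.i) (𝟙 P)) ∧
      (∀ j ≤ k, IsZero (Q.X j)) ∧ ∀ j, k + 2 ≤ j → IsIso (h.i.f j) := by
  obtain ⟨e, he, hhomotopy, hlow, hhigh⟩ :=
    P.exists_idempotent_homotopic_id_of_exactAt k hexact hproj
  obtain ⟨Q, i, r, hir, hri⟩ := IsIdempotentComplete.idempotents_split P e he
  have hir_f (j : ℕ) : i.f j ≫ r.f j = 𝟙 _ := by rw [← HomologicalComplex.comp_f, hir]; rfl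
  have hri_f (j : ℕ) : r.f j ≫ i.f j = e.f j := by rw [← HomologicalComplex.comp_f, hri]
  refine ⟨Q, ⟨i, r, hir⟩, hri ▸ hhomotopy, fun j hj => ?_, fun j hj => ?_⟩
  · rw [IsZero.iff_id_eq_zero, ← hir_f, ← Category.id_comp (i.f j), ← hir_f]
    simp only [Category.assoc, reassoc_of% hri_f, hlow j hj, zero_comp, comp_zero]
  · exact ⟨r.f j, hir_f j, (hri_f j).trans (hhigh j hj)⟩

end Abelian

end ChainComplex

namespace ModuleCat

variable {R : Type*} [Ring R]

lemma finite_of_retract {M N : ModuleCat R} (h : Retract M N) [Module.Finite R N] :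
    Module.Finite R M :=
  Module.Finite.of_surjective h.r.hom fun x =>
    ⟨h.i x, by rw [← ModuleCat.comp_apply, h.retract]; rfl⟩

lemma projective_of_retract {M N : ModuleCat R} (h : Retract M N) [Module.Projective R N] :
    Module.Projective R M :=
  Module.Projective.of_split h.i.hom h.r.hom (congrArg Hom.hom h.retract)

lemma subsingleton_of_retract {M N : ModuleCat R} (h : Retract M N) [Subsingleton N] :
    Subsingleton M :=
  (ConcreteCategory.injective_of_mono_of_preservesPullback h.i).subsingleton

lemma finite_homology_succ_of_isZero (K : ChainComplex (ModuleCat R) ℕ) (j : ℕ)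
    [Module.Finite R (K.X (j + 1))] (h : IsZero (K.X j)) :
    Module.Finite R (K.homology (j + 1)) :=
  have := K.isIso_iCycles (j + 1) j (by simp) (h.eq_of_tgt _ _)
  Module.Finite.of_surjective (inv (K.iCycles (j + 1)) ≫ K.homologyπ (j + 1)).hom
    ((ModuleCat.epi_iff_surjective _).mp inferInstance)

end ModuleCat

theorem truncate_acyclic_bottom_general
    (R : Type*) [Ring R] (n k : ℕ) (P : ChainComplex (ModuleCat R) ℕ)
    (hbdd : ∀ j, n < j → Subsingleton (P.X j))
    (hfg : ∀ j, Module.Finite R (P.X j)) (hproj : ∀ j, Module.Projective R (P.X j))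
    (hacyclic : ∀ i, i ≤ k → Subsingleton (P.homology i)) :
    (∃ Q : ChainComplex (ModuleCat R) ℕ,
      (∀ i, i ≤ k → Subsingleton (Q.X i)) ∧
      (∀ j, n < j → Subsingleton (Q.X j)) ∧
      (∀ j, Module.Finite R (Q.X j)) ∧ (∀ j, Module.Projective R (Q.X j)) ∧
      (∀ j, k + 2 ≤ j → Nonempty ((Q.X j : Type _) ≃ₗ[R] (P.X j : Type _))) ∧
      Nonempty (HomotopyEquiv P Q)) ∧
    Module.Finite R (P.homology (k + 1)) := by
  obtain ⟨Q, h, ⟨H⟩, hlow, hhigh⟩ := P.exists_deformationRetract_of_exactAt k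
    (fun j hj => (P.exactAt_iff_isZero_homology j).mpr
      (ModuleCat.isZero_iff_subsingleton.mpr (hacyclic j hj)))
    (fun j _ => inferInstance)
  have hX (j : ℕ) : Retract (Q.X j) (P.X j) := h.map (HomologicalComplex.eval _ _ j)
  let E : HomotopyEquiv P Q := ⟨h.r, h.i, H, Homotopy.ofEq h.retract⟩
  have hQfg (j : ℕ) : Module.Finite R (Q.X j) := ModuleCat.finite_of_retract (hX j)
  refine ⟨⟨Q, fun j hj => ModuleCat.subsingleton_of_isZero (hlow j hj),
    fun j hj => have := hbdd j hj; ModuleCat.subsingleton_of_retract (hX j), hQfg,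
    fun j => ModuleCat.projective_of_retract (hX j),
    fun j hj => have := hhigh j hj; ⟨(asIso (h.i.f j)).toLinearEquiv⟩, ⟨E⟩⟩, ?_⟩
  have := ModuleCat.finite_homology_succ_of_isZero Q k (hlow k le_rfl)
  exact Module.Finite.equiv (E.toHomologyIso (k + 1)).symm.toLinearEquiv

/-- Let `0 → Pₙ → ⋯ → P₀ → 0` be a chain complex of finitely generated projective `R`-modules
with `Hᵢ(P) = 0` for all `i ≤ k` (where `k < n`).  Then `P` is chain homotopy equivalent to a
chain complex of finitely generated projective modules of the form
`0 → Pₙ → ⋯ → P_{k+2} → Q → 0` (with `Q` in degree `k+1` and zeros below).  In particular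
`H_{k+1}(P)` is a finitely generated `R`-module. -/
theorem truncate_acyclic_bottom
    (R : Type*) [Ring R] (n k : ℕ) (hk : k < n) (P : ChainComplex (ModuleCat R) ℕ)
    (hbdd : ∀ j, n < j → Subsingleton (P.X j))
    (hfg : ∀ j, Module.Finite R (P.X j)) (hproj : ∀ j, Module.Projective R (P.X j))
    (hacyclic : ∀ i, i ≤ k → Subsingleton (P.homology i)) :
    (∃ Q : ChainComplex (ModuleCat R) ℕ,
      (∀ i, i ≤ k → Subsingleton (Q.X i)) ∧
      (∀ j, n < j → Subsingleton (Q.X j)) ∧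
      (∀ j, Module.Finite R (Q.X j)) ∧ (∀ j, Module.Projective R (Q.X j)) ∧
      (∀ j, k + 2 ≤ j → Nonempty ((Q.X j : Type _) ≃ₗ[R] (P.X j : Type _))) ∧
      Nonempty (HomotopyEquiv P Q)) ∧
    Module.Finite R (P.homology (k + 1)) :=
  truncate_acyclic_bottom_general R n k P hbdd hfg hproj hacyclic
end
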